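/- arXiv:1309.2877 — 2 statements merged into one kernel-verified Lean document; each statement's English description precedes it below -/
import Mathlib

section
/- Let $s,a \in \mathbb{C}$ with $\Re(a) > 0$ and $\Re(s) > 1$, and let $N, M \geq 1$ be integers. Then $\sum_{k=0}^{\infty} (a+k)^{-s} = S + I + T + R$, where $S = \sum_{k=0}^{N-1} (a+k)^{-s}$, $I = (a+N)^{1-s}/(s-1)$, $T = (a+N)^{-s}\bigl(\tfrac{1}{2} + \sum_{k=1}^{M} \tfrac{B_{2k}}{(2k)!} \tfrac{(s)_{2k-1}}{(a+N)^{2k-1}}\bigr)$, and $R = -\int_N^{\infty} \tfrac{\tilde B_{2M}(t)}{(2M)!} (s)_{2M} (a+t)^{-(s+2M)} \, dt$. -/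
/-!
Put `g m t = (s)_m (a + t)^{-(s+m)}`, so that `g m' = -g (m+1)`. On each interval `[c, c + 1]`
the periodic Bernoulli function `B̃_{j+1}` is the polynomial `B_{j+1}(t - c)`, whose derivative is
`(j + 1) B_j(t - c)`, so integrating `B̃_{j+1} g_{j+1}` by parts produces `(j + 1) B̃_j g_j`
plus boundary terms. For `j = 0` the boundary terms do not telescope, because
`B_1(1) = 1/2 ≠ -1/2 = B_1(0)`: they produce the partial sums of the series, the trapezoidal
correction `g 0 N / 2` and, via `B̃_0 = 1`, the integral of `g 0`. For `j ≥ 1` they telescope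
to `B_{j+1} g_j(N)`, and these vanish for even `j`. Letting the upper end of integration tend to
infinity along the integers gives the formula; the series itself is summable by comparison with
`∑ (Re a + k)^{-Re s}`.
-/

open MeasureTheory

/-- The periodic Bernoulli polynomial `B̃ n (t) = B n (t - ⌊t⌋)`. -/
noncomputable def periodicBernoulli (n : ℕ) (t : ℝ) : ℝ :=
  ((Polynomial.bernoulli n).map (algebraMap ℚ ℝ)).eval (Int.fract t)

open Complex Filter Set Topology
open scoped Nat
open Polynomial (aeval)

lemma periodicBernoulli_eq_aeval (j : ℕ) (t : ℝ) :
    periodicBernoulli j t = aeval (Int.fract t) (Polynomial.bernoulli j) :=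
  Polynomial.eval_map_algebraMap _ _

@[simp]
lemma periodicBernoulli_zero (t : ℝ) : periodicBernoulli 0 t = 1 := by
  simp [periodicBernoulli_eq_aeval]

lemma aeval_bernoulli_zero (j : ℕ) :
    aeval (0 : ℝ) (Polynomial.bernoulli j) = bernoulli j := by
  simp [← Polynomial.eval_map_algebraMap, Polynomial.eval_zero_map,
    Polynomial.bernoulli_eval_zero]

lemma aeval_bernoulli_one (j : ℕ) :
    aeval (1 : ℝ) (Polynomial.bernoulli j) = bernoulli' j := by
  simp [← Polynomial.eval_map_algebraMap, Polynomial.eval_one_map,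
    Polynomial.bernoulli_eval_one]

lemma hasDerivAt_aeval_bernoulli_succ (j : ℕ) (x : ℝ) :
    HasDerivAt (fun x : ℝ => aeval x (Polynomial.bernoulli (j + 1)))
      ((j + 1) * aeval x (Polynomial.bernoulli j)) x := by
  simpa [Polynomial.derivative_bernoulli_add_one] using
    Polynomial.hasDerivAt_aeval (Polynomial.bernoulli (j + 1)) x

lemma periodicBernoulli_of_mem_Ico (j : ℕ) {c : ℤ} {t : ℝ}
    (ht : t ∈ Ico (c : ℝ) (c + 1)) :
    periodicBernoulli j t = aeval (t - c) (Polynomial.bernoulli j) := by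
  rw [periodicBernoulli_eq_aeval, Int.fract, Int.floor_eq_on_Ico c t ht]

lemma measurable_periodicBernoulli (j : ℕ) : Measurable (periodicBernoulli j) := by
  unfold periodicBernoulli
  exact (Polynomial.continuous _).measurable.comp measurable_fract

lemma exists_abs_periodicBernoulli_le (j : ℕ) : ∃ C, ∀ t, |periodicBernoulli j t| ≤ C := by
  obtain ⟨C, hC⟩ := isCompact_Icc.exists_bound_of_continuousOn
    (Polynomial.continuous ((Polynomial.bernoulli j).map (algebraMap ℚ ℝ))).continuousOn
    (s := Icc (0 : ℝ) 1)
  exact ⟨C, fun t => hC _ ⟨Int.fract_nonneg t, (Int.fract_lt_one t).le⟩⟩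

lemma IntegrableOn.periodicBernoulli_mul (j : ℕ) {f : ℝ → ℂ} {s : Set ℝ}
    (hf : IntegrableOn f s) : IntegrableOn (fun t => (periodicBernoulli j t : ℂ) * f t) s := by
  obtain ⟨C, hC⟩ := exists_abs_periodicBernoulli_le j
  refine hf.bdd_mul (c := C) ?_ (ae_of_all _ fun t => ?_)
  · exact (measurable_ofReal.comp (measurable_periodicBernoulli j)).aestronglyMeasurable
  · simpa using hC t

lemma IntervalIntegrable.periodicBernoulli_mul (j : ℕ) {f : ℝ → ℂ} {a b : ℝ}
    (hf : IntervalIntegrable f volume a b) :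
    IntervalIntegrable (fun t => (periodicBernoulli j t : ℂ) * f t) volume a b :=
  ⟨IntegrableOn.periodicBernoulli_mul j hf.1, IntegrableOn.periodicBernoulli_mul j hf.2⟩

lemma integral_periodicBernoulli_mul_eq_aeval_sub (j : ℕ) (c : ℤ) (f : ℝ → ℂ) :
    ∫ t in (c : ℝ)..c + 1, (periodicBernoulli j t : ℂ) * f t =
      ∫ t in (c : ℝ)..c + 1, (aeval (t - c) (Polynomial.bernoulli j) : ℂ) * f t := by
  refine intervalIntegral.integral_congr_ae ?_
  filter_upwards [Measure.ae_ne volume ((c : ℝ) + 1)] with t hne ht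
  rw [uIoc_of_le (by linarith)] at ht
  rw [periodicBernoulli_of_mem_Ico j ⟨ht.1.le, lt_of_le_of_ne ht.2 hne⟩]

-- The boundary values are `B_{j+1}(1) = B'_{j+1}` and `B_{j+1}(0) = B_{j+1}`; they differ only
-- for `j = 0`.
theorem integral_periodicBernoulli_succ_mul_deriv_period (j : ℕ) (c : ℤ) {f f' : ℝ → ℂ}
    (hf : ∀ t ∈ Icc (c : ℝ) (c + 1), HasDerivAt f (f' t) t)
    (hf' : IntervalIntegrable f' volume c (c + 1)) :
    ∫ t in (c : ℝ)..c + 1, (periodicBernoulli (j + 1) t : ℂ) * f' t =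
      bernoulli' (j + 1) * f (c + 1) - bernoulli (j + 1) * f c
        - (j + 1) * ∫ t in (c : ℝ)..c + 1, (periodicBernoulli j t : ℂ) * f t := by
  have hc : (c : ℝ) ≤ c + 1 := by linarith
  have hu : ∀ t ∈ uIcc (c : ℝ) (c + 1),
      HasDerivAt (fun t : ℝ => (aeval (t - c) (Polynomial.bernoulli (j + 1)) : ℂ))
        (((j + 1) * aeval (t - c) (Polynomial.bernoulli j) : ℝ) : ℂ) t := fun t _ =>
    ((hasDerivAt_aeval_bernoulli_succ j (t - c)).comp_sub_const t (c : ℝ)).ofReal_comp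
  have hu' : IntervalIntegrable
      (fun t : ℝ => (((j + 1) * aeval (t - c) (Polynomial.bernoulli j) : ℝ) : ℂ))
      volume c (c + 1) := by
    refine Continuous.intervalIntegrable ?_ _ _
    fun_prop
  rw [integral_periodicBernoulli_mul_eq_aeval_sub, integral_periodicBernoulli_mul_eq_aeval_sub,
    intervalIntegral.integral_mul_deriv_eq_deriv_mul hu
      (fun t ht => hf t (by rwa [uIcc_of_le hc] at ht)) hu' hf',
    ← intervalIntegral.integral_const_mul]
  simp [aeval_bernoulli_zero, aeval_bernoulli_one, mul_assoc]

theorem integral_periodicBernoulli_succ_mul_deriv_eq_sum (j : ℕ) (N : ℤ) (L : ℕ)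
    {f f' : ℝ → ℂ}
    (hf : ∀ t, (N : ℝ) ≤ t → HasDerivAt f (f' t) t)
    (hf' : IntervalIntegrable f' volume N (N + L)) :
    ∫ t in (N : ℝ)..N + L, (periodicBernoulli (j + 1) t : ℂ) * f' t =
      ∑ i ∈ Finset.range L,
          (bernoulli' (j + 1) * f (N + i + 1) - bernoulli (j + 1) * f (N + i))
        - (j + 1) * ∫ t in (N : ℝ)..N + L, (periodicBernoulli j t : ℂ) * f t := by
  set x : ℕ → ℝ := fun i => ((N + i : ℤ) : ℝ) with hx
  have hx_succ : ∀ i : ℕ, x (i + 1) = x i + 1 := fun i => by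
    simp only [hx]; push_cast; ring
  have hsub : ∀ i < L, uIcc (x i) (x (i + 1)) ⊆ uIcc (N : ℝ) (N + L) := by
    intro i hi
    have : (i : ℝ) + 1 ≤ L := by exact_mod_cast hi
    simp only [hx]
    rw [uIcc_of_le (by push_cast; linarith), uIcc_of_le (by simp)]
    exact Icc_subset_Icc (by simp) (by push_cast; linarith)
  have hf'_piece : ∀ i < L, IntervalIntegrable f' volume (x i) (x (i + 1)) :=
    fun i hi => hf'.mono_set (hsub i hi)
  have hf_piece : ∀ i : ℕ, ∀ t ∈ Icc (x i) (x i + 1), HasDerivAt f (f' t) t :=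
    fun i t ht => hf t <| by
      simp only [hx] at ht
      push_cast at ht
      linarith [ht.1, i.cast_nonneg (α := ℝ)]
  have hint : ∀ i < L, IntervalIntegrable
      (fun t => (periodicBernoulli j t : ℂ) * f t) volume (x i) (x (i + 1)) := by
    intro i _
    refine (ContinuousOn.intervalIntegrable fun t ht => ?_).periodicBernoulli_mul _
    rw [hx_succ, uIcc_of_le (by linarith)] at ht
    exact (hf_piece i t ht).continuousAt.continuousWithinAt
  have hsum' := intervalIntegral.sum_integral_adjacent_intervals
    (fun i hi => (hf'_piece i hi).periodicBernoulli_mul (j + 1))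
  have hsum := intervalIntegral.sum_integral_adjacent_intervals hint
  have hx0 : x 0 = N := by simp [hx]
  have hxL : x L = N + L := by simp [hx]
  rw [hx0, hxL] at hsum' hsum
  rw [← hsum', ← hsum, Finset.mul_sum, ← Finset.sum_sub_distrib]
  refine Finset.sum_congr rfl fun i hi => ?_
  have hpiece := hf'_piece i (Finset.mem_range.mp hi)
  rw [hx_succ] at hpiece ⊢
  rw [integral_periodicBernoulli_succ_mul_deriv_period j (N + i) (hf_piece i) hpiece]
  simp only [hx]
  push_cast
  ring

section Tail

variable {N : ℤ} {f f' : ℝ → ℂ}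

lemma IntegrableOn.intervalIntegrable_of_Ioi {a b : ℝ} (hf : IntegrableOn f (Ioi a))
    (hab : a ≤ b) : IntervalIntegrable f volume a b :=
  (intervalIntegrable_iff_integrableOn_Ioc_of_le hab).2 (hf.mono_set Ioc_subset_Ioi_self)

lemma tendsto_int_add_natCast_atTop (N : ℤ) :
    Tendsto (fun L : ℕ => (N : ℝ) + L) atTop atTop :=
  tendsto_atTop_add_const_left _ _ tendsto_natCast_atTop_atTop

lemma tendsto_intervalIntegral_int_add_natCast (hf : IntegrableOn f (Ioi N)) :
    Tendsto (fun L : ℕ => ∫ t in (N : ℝ)..N + L, f t) atTop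
      (𝓝 (∫ t in Ioi (N : ℝ), f t)) :=
  intervalIntegral_tendsto_integral_Ioi _ hf (tendsto_int_add_natCast_atTop N)

lemma tendsto_apply_int_add_natCast_zero (hf : ∀ t, (N : ℝ) ≤ t → HasDerivAt f (f' t) t)
    (hfi : IntegrableOn f (Ioi N)) (hf'i : IntegrableOn f' (Ioi N)) :
    Tendsto (fun L : ℕ => f (N + L)) atTop (𝓝 0) :=
  (tendsto_zero_of_hasDerivAt_of_integrableOn_Ioi (fun t ht => hf t ht.le) hf'i hfi).comp
    (tendsto_int_add_natCast_atTop N)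

lemma tendsto_sum_range_eulerMaclaurin_one (hf : ∀ t, (N : ℝ) ≤ t → HasDerivAt f (f' t) t)
    (hfi : IntegrableOn f (Ioi N)) (hf'i : IntegrableOn f' (Ioi N)) :
    Tendsto (fun L : ℕ => ∑ i ∈ Finset.range L, f (N + i)) atTop
      (𝓝 ((∫ t in Ioi (N : ℝ), f t) + f N / 2
        + ∫ t in Ioi (N : ℝ), (periodicBernoulli 1 t : ℂ) * f' t)) := by
  have hlim := tendsto_apply_int_add_natCast_zero hf hfi hf'i
  have hsum : ∀ L : ℕ, ∑ i ∈ Finset.range L, f (N + i) =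
      (∫ t in (N : ℝ)..N + L, f t) + f N / 2
        + (∫ t in (N : ℝ)..N + L, (periodicBernoulli 1 t : ℂ) * f' t) - f (N + L) / 2 := by
    intro L
    have hibp := integral_periodicBernoulli_succ_mul_deriv_eq_sum 0 N L hf
      (IntegrableOn.intervalIntegrable_of_Ioi hf'i (by simp))
    have htel := Finset.sum_range_sub (fun i : ℕ => f (N + i)) L
    simp only [zero_add, periodicBernoulli_zero, bernoulli'_one, bernoulli_one] at hibp
    push_cast at hibp htel
    simp only [zero_add, one_mul, add_zero] at hibp htel
    have hsplit : ∑ i ∈ Finset.range L, (1 / 2 * f (N + i + 1) - -1 / 2 * f (N + i)) =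
        1 / 2 * ∑ i ∈ Finset.range L, (f (N + i + 1) - f (N + i))
          + ∑ i ∈ Finset.range L, f (N + i) := by
      rw [Finset.mul_sum, ← Finset.sum_add_distrib]
      exact Finset.sum_congr rfl fun i _ => by ring
    simp only [← add_assoc] at htel
    linear_combination -hsplit - hibp - 1 / 2 * htel
  have h := ((((tendsto_intervalIntegral_int_add_natCast hfi).add_const (f N / 2)).add
    (tendsto_intervalIntegral_int_add_natCast
      (IntegrableOn.periodicBernoulli_mul 1 hf'i))).sub (hlim.div_const 2)).congr
    fun L => (hsum L).symm
  simpa using h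

lemma integral_Ioi_periodicBernoulli_succ_mul_deriv {j : ℕ} (hj : j ≠ 0)
    (hf : ∀ t, (N : ℝ) ≤ t → HasDerivAt f (f' t) t)
    (hfi : IntegrableOn f (Ioi N)) (hf'i : IntegrableOn f' (Ioi N)) :
    ∫ t in Ioi (N : ℝ), (periodicBernoulli (j + 1) t : ℂ) * f' t =
      -(bernoulli (j + 1) * f N)
        - (j + 1) * ∫ t in Ioi (N : ℝ), (periodicBernoulli j t : ℂ) * f t := by
  have hlim := tendsto_apply_int_add_natCast_zero hf hfi hf'i
  have hfinite : ∀ L : ℕ,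
      ∫ t in (N : ℝ)..N + L, (periodicBernoulli (j + 1) t : ℂ) * f' t =
      bernoulli (j + 1) * (f (N + L) - f N)
        - (j + 1) * ∫ t in (N : ℝ)..N + L, (periodicBernoulli j t : ℂ) * f t := by
    intro L
    have htel := Finset.sum_range_sub (fun i : ℕ => f (N + i)) L
    push_cast at htel
    simp only [add_zero, ← add_assoc] at htel
    rw [integral_periodicBernoulli_succ_mul_deriv_eq_sum j N L hf
      (IntegrableOn.intervalIntegrable_of_Ioi hf'i (by simp)),
      bernoulli_eq_bernoulli'_of_ne_one (by omega), ← htel, Finset.mul_sum]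
    simp only [mul_sub]
  refine tendsto_nhds_unique ((tendsto_intervalIntegral_int_add_natCast
    (IntegrableOn.periodicBernoulli_mul (j + 1) hf'i)).congr hfinite) ?_
  simpa using ((hlim.sub_const (f N)).const_mul (bernoulli (j + 1) : ℂ)).sub
    ((tendsto_intervalIntegral_int_add_natCast
      (IntegrableOn.periodicBernoulli_mul j hfi)).const_mul ((j : ℂ) + 1))

end Tail

section Chain

variable {g : ℕ → ℝ → ℂ} {N : ℤ}

lemma integral_Ioi_periodicBernoulli_mul_chain_succ_div_factorial
    (hg : ∀ m t, (N : ℝ) ≤ t → HasDerivAt (g m) (-g (m + 1) t) t)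
    (hgi : ∀ m, IntegrableOn (g m) (Ioi N)) {j : ℕ} (hj : j ≠ 0) :
    (∫ t in Ioi (N : ℝ), (periodicBernoulli (j + 1) t : ℂ) * g (j + 1) t) / (j + 1)! =
      (∫ t in Ioi (N : ℝ), (periodicBernoulli j t : ℂ) * g j t) / j !
        + bernoulli (j + 1) / (j + 1)! * g j N := by
  have h := integral_Ioi_periodicBernoulli_succ_mul_deriv hj (hg j) (hgi j) (hgi (j + 1)).neg
  simp only [mul_neg, integral_neg] at h
  rw [neg_eq_iff_eq_neg] at h
  rw [h, Nat.factorial_succ]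
  push_cast
  field_simp
  ring

lemma integral_Ioi_periodicBernoulli_mul_chain_div_factorial
    (hg : ∀ m t, (N : ℝ) ≤ t → HasDerivAt (g m) (-g (m + 1) t) t)
    (hgi : ∀ m, IntegrableOn (g m) (Ioi N)) {M : ℕ} (hM : 1 ≤ M) :
    (∫ t in Ioi (N : ℝ), (periodicBernoulli (2 * M) t : ℂ) * g (2 * M) t) / (2 * M)! =
      (∫ t in Ioi (N : ℝ), (periodicBernoulli 1 t : ℂ) * g 1 t)
        + ∑ k ∈ Finset.Icc 1 M, bernoulli (2 * k) / (2 * k)! * g (2 * k - 1) N := by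
  induction M, hM using Nat.le_induction with
  | base =>
    simpa using integral_Ioi_periodicBernoulli_mul_chain_succ_div_factorial hg hgi one_ne_zero
  | succ M hM ih =>
    have hodd : bernoulli (2 * M + 1) = 0 := bernoulli_eq_zero_of_odd (odd_two_mul_add_one M)
      (by omega)
    rw [show 2 * (M + 1) = 2 * M + 1 + 1 by ring,
      integral_Ioi_periodicBernoulli_mul_chain_succ_div_factorial hg hgi (by omega),
      integral_Ioi_periodicBernoulli_mul_chain_succ_div_factorial hg hgi (by omega), ih,
      Finset.sum_Icc_succ_top (by omega), hodd]
    simp [add_assoc, show 2 * (M + 1) = 2 * M + 1 + 1 by ring]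

theorem tendsto_sum_range_eulerMaclaurin
    (hg : ∀ m t, (N : ℝ) ≤ t → HasDerivAt (g m) (-g (m + 1) t) t)
    (hgi : ∀ m, IntegrableOn (g m) (Ioi N)) {M : ℕ} (hM : 1 ≤ M) :
    Tendsto (fun L : ℕ => ∑ i ∈ Finset.range L, g 0 (N + i)) atTop
      (𝓝 ((∫ t in Ioi (N : ℝ), g 0 t) + g 0 N / 2
        + ∑ k ∈ Finset.Icc 1 M, bernoulli (2 * k) / (2 * k)! * g (2 * k - 1) N
        - (∫ t in Ioi (N : ℝ), (periodicBernoulli (2 * M) t : ℂ) * g (2 * M) t)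
          / (2 * M)!)) := by
  convert tendsto_sum_range_eulerMaclaurin_one (hg 0) (hgi 0) (hgi 1).neg using 2
  rw [integral_Ioi_periodicBernoulli_mul_chain_div_factorial hg hgi hM]
  simp only [mul_neg, integral_neg]
  ring

end Chain

section Hurwitz

lemma norm_cpow_le_exp_mul_re_rpow {z w : ℂ} (hz : 0 < z.re) (hw : w.re ≤ 0) :
    ‖z ^ w‖ ≤ Real.exp (Real.pi * |w.im|) * z.re ^ w.re := by
  have harg : -(z.arg * w.im) ≤ Real.pi * |w.im| := by
    calc -(z.arg * w.im) ≤ |z.arg| * |w.im| := by rw [← abs_mul]; exact neg_le_abs _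
      _ ≤ Real.pi * |w.im| := by gcongr; exact abs_arg_le_pi z
  calc ‖z ^ w‖ ≤ ‖z‖ ^ w.re / Real.exp (z.arg * w.im) := norm_cpow_le z w
    _ = Real.exp (-(z.arg * w.im)) * ‖z‖ ^ w.re := by rw [Real.exp_neg]; ring
    _ ≤ Real.exp (Real.pi * |w.im|) * z.re ^ w.re :=
      mul_le_mul (Real.exp_le_exp.2 harg) (Real.rpow_le_rpow_of_nonpos hz (re_le_norm z) hw)
        (by positivity) (by positivity)

variable {s a : ℂ}

lemma add_ofReal_re_pos (ha : 0 < a.re) {t : ℝ} (ht : 0 ≤ t) : 0 < (a + t).re := by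
  simp only [add_re, ofReal_re]
  linarith

lemma tendsto_add_ofReal_cpow_atTop (ha : 0 < a.re) {w : ℂ} (hw : w.re < 0) :
    Tendsto (fun t : ℝ => (a + t) ^ w) atTop (𝓝 0) := by
  have hlim : Tendsto (fun t : ℝ => Real.exp (Real.pi * |w.im|) * (a.re + t) ^ w.re) atTop
      (𝓝 0) := by
    simpa using ((tendsto_rpow_neg_atTop (neg_pos.2 hw)).comp
      (tendsto_atTop_add_const_left _ a.re tendsto_id)).const_mul (Real.exp (Real.pi * |w.im|))
  refine squeeze_zero_norm' ?_ hlim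
  filter_upwards [eventually_ge_atTop 0] with t ht
  simpa using norm_cpow_le_exp_mul_re_rpow (add_ofReal_re_pos ha ht) hw.le

lemma hasDerivAt_add_ofReal_cpow {w : ℂ} {t : ℝ} (ht : a + t ∈ slitPlane) :
    HasDerivAt (fun t : ℝ => (a + t) ^ w) (w * (a + t) ^ (w - 1)) t := by
  simpa using (((hasDerivAt_id (t : ℂ)).const_add a).cpow_const ht).comp_ofReal

/-- `(-1)^m` times the `m`-th derivative of `t ↦ (a + t)^{-s}`. -/
noncomputable def cpowNegDeriv (s a : ℂ) (m : ℕ) (t : ℝ) : ℂ :=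
  (ascPochhammer ℂ m).eval s * (a + t) ^ (-(s + m))

lemma cpowNegDeriv_zero : cpowNegDeriv s a 0 = fun t : ℝ => (a + t) ^ (-s) := by
  ext t
  simp [cpowNegDeriv]

lemma hasDerivAt_cpowNegDeriv (m : ℕ) {t : ℝ} (ht : a + t ∈ slitPlane) :
    HasDerivAt (cpowNegDeriv s a m) (-cpowNegDeriv s a (m + 1) t) t := by
  refine ((hasDerivAt_add_ofReal_cpow ht).const_mul _).congr_deriv ?_
  rw [cpowNegDeriv, ascPochhammer_succ_eval, show -(s + m) - 1 = -(s + (m + 1 : ℕ)) by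
    push_cast; ring]
  ring

lemma integrableOn_cpowNegDeriv (ha : 0 < a.re) {m : ℕ} (hs : 1 < s.re + m) {c : ℝ}
    (hc : 0 ≤ c) : IntegrableOn (cpowNegDeriv s a m) (Ioi c) := by
  have hre : ∀ t ∈ Ioi c, 0 < (a + t).re := fun t ht =>
    add_ofReal_re_pos ha (hc.trans ht.out.le)
  have hbound := (integrableOn_add_rpow_Ioi_of_lt (a := -(s.re + m)) (m := a.re) (by linarith)
    (by linarith)).const_mul (‖(ascPochhammer ℂ m).eval s‖ * Real.exp (Real.pi * |s.im|))
  refine hbound.mono' (ContinuousOn.aestronglyMeasurable (fun t ht => (hasDerivAt_cpowNegDeriv m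
    (Or.inl (hre t ht))).continuousAt.continuousWithinAt) measurableSet_Ioi) ?_
  filter_upwards [ae_restrict_mem measurableSet_Ioi] with t ht
  have := norm_cpow_le_exp_mul_re_rpow (w := -(s + m)) (hre t ht)
    (by simp only [neg_re, add_re, natCast_re]; linarith [m.cast_nonneg (α := ℝ)])
  simp only [add_re, ofReal_re, neg_re, neg_im, add_im, natCast_re, natCast_im, add_zero,
    abs_neg] at this
  rw [cpowNegDeriv, norm_mul, mul_assoc, add_comm t]
  gcongr

lemma summable_add_natCast_cpow_neg (ha : 0 < a.re) (hs : 1 < s.re) :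
    Summable fun k : ℕ => (a + k) ^ (-s) := by
  refine Summable.of_norm_bounded
    (((Real.summable_one_div_nat_add_rpow a.re s.re).2 hs).mul_left
      (Real.exp (Real.pi * |s.im|))) fun k => ?_
  have hk : 0 < (k : ℝ) + a.re := by positivity
  calc ‖(a + k) ^ (-s)‖ ≤ Real.exp (Real.pi * |s.im|) * (a.re + k) ^ (-s.re) := by
        simpa using norm_cpow_le_exp_mul_re_rpow (w := -s) (add_ofReal_re_pos ha k.cast_nonneg)
          (by simp only [neg_re]; linarith)
    _ = Real.exp (Real.pi * |s.im|) * (1 / |k + a.re| ^ s.re) := by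
        rw [abs_of_pos hk, add_comm, Real.rpow_neg hk.le, one_div]

lemma integral_Ioi_add_ofReal_cpow_neg (ha : 0 < a.re) (hs : 1 < s.re) {c : ℝ} (hc : 0 ≤ c) :
    ∫ t in Ioi c, (a + t) ^ (-s) = (a + c) ^ (1 - s) / (s - 1) := by
  have hs1 : s - 1 ≠ 0 := sub_ne_zero.2 fun h => by simp [h] at hs
  have hderiv : ∀ t ∈ Ici c, HasDerivAt (fun t : ℝ => -(a + t) ^ (1 - s) / (s - 1))
      ((a + t) ^ (-s)) t := by
    intro t ht
    have hslit : a + t ∈ slitPlane := Or.inl (add_ofReal_re_pos ha (hc.trans ht))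
    refine ((hasDerivAt_add_ofReal_cpow hslit).neg.div_const (s - 1)).congr_deriv ?_
    rw [sub_sub_cancel_left]
    field_simp
    ring
  have hlim : Tendsto (fun t : ℝ => -(a + t) ^ (1 - s) / (s - 1)) atTop (𝓝 0) := by
    have hw : (1 - s).re < 0 := by simp only [sub_re, one_re]; linarith
    simpa using ((tendsto_add_ofReal_cpow_atTop ha hw).neg.div_const (s - 1))
  rw [integral_Ioi_of_hasDerivAt_of_tendsto' hderiv ?_ hlim]
  · ring
  · simpa [cpowNegDeriv_zero] using
      integrableOn_cpowNegDeriv (s := s) ha (m := 0) (by simpa using hs) hc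

lemma cpowNegDeriv_eq_mul_div (m : ℕ) {t : ℝ} (ht : a + t ≠ 0) :
    cpowNegDeriv s a m t = (a + t) ^ (-s) * ((ascPochhammer ℂ m).eval s / (a + t) ^ m) := by
  rw [cpowNegDeriv, neg_add, cpow_add _ _ ht, cpow_neg _ (m : ℂ), cpow_natCast]
  ring

lemma tsum_nat_add_cpow_neg_eulerMaclaurin (ha : 0 < a.re) (hs : 1 < s.re) (N : ℕ) {M : ℕ}
    (hM : 1 ≤ M) :
    ∑' i : ℕ, (a + (i + N : ℕ)) ^ (-s) =
      (a + N) ^ (1 - s) / (s - 1) + (a + N) ^ (-s) / 2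
        + ∑ k ∈ Finset.Icc 1 M, bernoulli (2 * k) / (2 * k)! * cpowNegDeriv s a (2 * k - 1) N
        - (∫ t in Ioi (N : ℝ), (periodicBernoulli (2 * M) t : ℂ) * cpowNegDeriv s a (2 * M) t)
          / (2 * M)! := by
  have hN : (0 : ℝ) ≤ ((N : ℤ) : ℝ) := by simp
  have hEM := tendsto_sum_range_eulerMaclaurin (g := cpowNegDeriv s a)
    (fun m t ht => hasDerivAt_cpowNegDeriv m (Or.inl (add_ofReal_re_pos ha (hN.trans ht))))
    (fun m => integrableOn_cpowNegDeriv ha (by linarith [m.cast_nonneg (α := ℝ)]) hN) hM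
  have hsum := (summable_nat_add_iff N).2 (summable_add_natCast_cpow_neg ha hs)
  rw [tendsto_nhds_unique hsum.hasSum.tendsto_sum_nat
    (hEM.congr fun L => Finset.sum_congr rfl fun i _ => by simp [cpowNegDeriv_zero, add_comm])]
  simp only [Int.cast_natCast, cpowNegDeriv_zero, ofReal_natCast,
    integral_Ioi_add_ofReal_cpow_neg ha hs (Nat.cast_nonneg N)]

end Hurwitz

theorem euler_maclaurin_hurwitz_series_general
    (s a : ℂ) (hs : 1 < s.re) (ha : 0 < a.re) (N M : ℕ) (hM : 1 ≤ M) :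
    ∑' k : ℕ, (a + (k : ℂ)) ^ (-s) =
      (∑ k ∈ Finset.range N, (a + (k : ℂ)) ^ (-s))
      + (a + (N : ℂ)) ^ (1 - s) / (s - 1)
      + (a + (N : ℂ)) ^ (-s) *
          (1 / 2 + ∑ k ∈ Finset.Icc 1 M,
            ((bernoulli (2 * k) : ℂ) / (Nat.factorial (2 * k) : ℂ)) *
              (Polynomial.eval s (ascPochhammer ℂ (2 * k - 1)) / (a + (N : ℂ)) ^ (2 * k - 1)))
      + -∫ t in Set.Ioi (N : ℝ),
          ((periodicBernoulli (2 * M) t : ℂ) / (Nat.factorial (2 * M) : ℂ)) *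
            Polynomial.eval s (ascPochhammer ℂ (2 * M)) *
            (a + (t : ℂ)) ^ (-(s + 2 * (M : ℂ))) := by
  have hzN : a + ((N : ℝ) : ℂ) ≠ 0 :=
    slitPlane_ne_zero (Or.inl (add_ofReal_re_pos ha (Nat.cast_nonneg N)))
  have hT : ∑ k ∈ Finset.Icc 1 M, bernoulli (2 * k) / (2 * k)! * cpowNegDeriv s a (2 * k - 1) N
      = (a + N) ^ (-s) * ∑ k ∈ Finset.Icc 1 M, bernoulli (2 * k) / (2 * k)!
        * ((ascPochhammer ℂ (2 * k - 1)).eval s / (a + N) ^ (2 * k - 1)) := by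
    rw [Finset.mul_sum]
    refine Finset.sum_congr rfl fun k _ => ?_
    rw [cpowNegDeriv_eq_mul_div _ hzN, ofReal_natCast]
    ring
  have hR :
      (∫ t in Ioi (N : ℝ), (periodicBernoulli (2 * M) t : ℂ) * cpowNegDeriv s a (2 * M) t)
        / (2 * M)! = ∫ t in Ioi (N : ℝ), (periodicBernoulli (2 * M) t : ℂ) / (2 * M)!
        * (ascPochhammer ℂ (2 * M)).eval s * (a + t) ^ (-(s + 2 * M)) := by
    rw [← integral_div]
    refine integral_congr_ae (ae_of_all _ fun t => ?_)
    simp only [cpowNegDeriv, Nat.cast_mul, Nat.cast_ofNat]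
    ring
  rw [← (summable_add_natCast_cpow_neg ha hs).sum_add_tsum_nat_add N,
    tsum_nat_add_cpow_neg_eulerMaclaurin ha hs N hM, hT, hR]
  ring

/-- Euler-Maclaurin summation for the Hurwitz zeta series: for `Re(a) > 0`, `Re(s) > 1` and
integers `N, M ≥ 1`, `∑_{k=0}^∞ (a+k)^{-s} = S + I + T + R` with
`S = ∑_{k=0}^{N-1} (a+k)^{-s}`, `I = (a+N)^{1-s}/(s-1)`,
`T = (a+N)^{-s} (1/2 + ∑_{k=1}^M B_{2k}/(2k)! · (s)_{2k-1}/(a+N)^{2k-1})`,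
`R = -∫_N^∞ B̃_{2M}(t)/(2M)! · (s)_{2M} (a+t)^{-(s+2M)} dt`. -/
theorem euler_maclaurin_hurwitz_series
    (s a : ℂ) (hs : 1 < s.re) (ha : 0 < a.re) (N M : ℕ) (hN : 1 ≤ N) (hM : 1 ≤ M) :
    ∑' k : ℕ, (a + (k : ℂ)) ^ (-s) =
      (∑ k ∈ Finset.range N, (a + (k : ℂ)) ^ (-s))
      + (a + (N : ℂ)) ^ (1 - s) / (s - 1)
      + (a + (N : ℂ)) ^ (-s) *
          (1 / 2 + ∑ k ∈ Finset.Icc 1 M,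
            ((bernoulli (2 * k) : ℂ) / (Nat.factorial (2 * k) : ℂ)) *
              (Polynomial.eval s (ascPochhammer ℂ (2 * k - 1)) / (a + (N : ℂ)) ^ (2 * k - 1)))
      + -∫ t in Set.Ioi (N : ℝ),
          ((periodicBernoulli (2 * M) t : ℂ) / (Nat.factorial (2 * M) : ℂ)) *
            Polynomial.eval s (ascPochhammer ℂ (2 * M)) *
            (a + (t : ℂ)) ^ (-(s + 2 * (M : ℂ))) :=
  euler_maclaurin_hurwitz_series_general s a hs ha N M hM
end

section
/- Let $s = \sigma + \tau i$ and $a = \alpha + \beta i$ be complex numbers and let $N, M$ be positive integers such that $\alpha + N > 1$ and $\sigma + 2M > 1$. Then for every integer $k \geq 0$, $\int_N^{\infty} \bigl| \log(a+t)^k \, (a+t)^{-(s+2M)} \bigr| \, dt \leq K \cdot J_k(N + \alpha, \, \sigma + 2M, \, C)$, where $C = \tfrac{1}{2}\log\bigl(1 + \tfrac{\beta^2}{(\alpha+N)^2}\bigr) + \arctan\bigl(\tfrac{|\beta|}{\alpha+N}\bigr)$ and $K = \exp\bigl(\max\bigl(0, \, \tau \arctan\bigl(\tfrac{\beta}{\alpha+N}\bigr)\bigr)\bigr)$.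 -/
/-!
For `z = a + t` with `t > N` we have `Re z ≥ q := α + N > 0`, so `arg z = arctan (β / Re z)`.
Hence `|arg z| ≤ arctan (|β| / q)` and `log ‖z‖ ≤ log (Re z) + ½ log (1 + β² / q²)`, which
bound `‖log z‖ ≤ |log ‖z‖| + |arg z|` by `C + log (Re z)`. Also
`‖z ^ (-w)‖ = ‖z‖ ^ (-Re w) e ^ (Im w · arg z)` is at most `K (Re z) ^ (-Re w)`, because
`arctan (β / Re z)` has the sign of `arctan (β / q)` and a smaller size. So the integrand is at
most `K` times the integrand of `J` at `Re z = t + α`, and the substitution `u = t + α` gives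
the bound.
-/

open MeasureTheory

noncomputable def J (A B C : ℝ) (k : ℕ) : ℝ :=
  ∫ t in Set.Ioi A, t ^ (-B) * (C + Real.log t) ^ k

open Real Set Filter Asymptotics

lemma Real.abs_arctan (x : ℝ) : |arctan x| = arctan |x| := by
  rcases abs_cases x with ⟨hx, hx0⟩ | ⟨hx, hx0⟩
  · rw [hx, abs_of_nonneg (arctan_nonneg.2 hx0)]
  · rw [hx, arctan_neg, abs_of_neg (arctan_lt_zero.2 hx0)]

lemma Real.mul_arctan_div_le_max {q p : ℝ} (τ β : ℝ) (hq : 0 < q) (hqp : q ≤ p) :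
    τ * arctan (β / p) ≤ max 0 (τ * arctan (β / q)) := by
  have hp : 0 < p := hq.trans_le hqp
  rcases le_total 0 β with hβ | hβ <;> rcases le_total 0 τ with hτ | hτ
  · exact le_max_of_le_right <| mul_le_mul_of_nonneg_left
      (arctan_le_arctan_iff.2 (div_le_div_of_nonneg_left hβ hq hqp)) hτ
  · exact le_max_of_le_left <| mul_nonpos_of_nonpos_of_nonneg hτ
      (arctan_nonneg.2 (div_nonneg hβ hp.le))
  · exact le_max_of_le_left <| mul_nonpos_of_nonneg_of_nonpos hτ
      (arctan_le_zero.2 (div_nonpos_of_nonpos_of_nonneg hβ hp.le))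
  · refine le_max_of_le_right <| mul_le_mul_of_nonpos_left (arctan_le_arctan_iff.2 ?_) hτ
    rw [div_le_div_iff₀ hq hp]
    nlinarith

namespace Complex

lemma arg_eq_arctan_of_re_pos {z : ℂ} (hz : 0 < z.re) : arg z = Real.arctan (z.im / z.re) := by
  rw [← tan_arg, Real.arctan_tan (neg_pi_div_two_lt_arg_iff.2 (Or.inl hz))
    (arg_lt_pi_div_two_iff.2 (Or.inl hz))]

variable {z : ℂ} {q : ℝ}

lemma abs_arg_le_arctan (hq : 0 < q) (hqz : q ≤ z.re) :
    |arg z| ≤ Real.arctan (|z.im| / q) := by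
  rw [arg_eq_arctan_of_re_pos (hq.trans_le hqz), Real.abs_arctan, abs_div,
    abs_of_pos (hq.trans_le hqz), Real.arctan_le_arctan_iff]
  exact div_le_div_of_nonneg_left (abs_nonneg _) hq hqz

lemma log_norm_le (hq : 0 < q) (hqz : q ≤ z.re) :
    Real.log ‖z‖ ≤ Real.log z.re + 1 / 2 * Real.log (1 + z.im ^ 2 / q ^ 2) := by
  have hre : 0 < z.re := hq.trans_le hqz
  have hsq : ‖z‖ ^ 2 ≤ z.re ^ 2 * (1 + z.im ^ 2 / q ^ 2) := by
    have hratio : 1 ≤ (z.re / q) ^ 2 := one_le_pow₀ ((one_le_div hq).2 hqz)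
    calc ‖z‖ ^ 2 = z.re ^ 2 + z.im ^ 2 := by rw [Complex.sq_norm, normSq_apply]; ring
      _ ≤ z.re ^ 2 + z.im ^ 2 * (z.re / q) ^ 2 := by
        gcongr; exact le_mul_of_one_le_right (sq_nonneg _) hratio
      _ = z.re ^ 2 * (1 + z.im ^ 2 / q ^ 2) := by field_simp
  have hz : 0 < ‖z‖ := hre.trans_le (re_le_norm z)
  calc Real.log ‖z‖ = 1 / 2 * Real.log (‖z‖ ^ 2) := by rw [Real.log_pow]; push_cast; ring
    _ ≤ 1 / 2 * Real.log (z.re ^ 2 * (1 + z.im ^ 2 / q ^ 2)) := by gcongr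
    _ = Real.log z.re + 1 / 2 * Real.log (1 + z.im ^ 2 / q ^ 2) := by
      rw [Real.log_mul (by positivity) (by positivity), Real.log_pow]; push_cast; ring

lemma norm_log_le (hq : 0 < q) (hqz : q ≤ z.re) (hz : 1 ≤ z.re) :
    ‖Complex.log z‖ ≤
      1 / 2 * Real.log (1 + z.im ^ 2 / q ^ 2) + Real.arctan (|z.im| / q) + Real.log z.re := by
  have hlog : 0 ≤ Real.log ‖z‖ := Real.log_nonneg (hz.trans (re_le_norm z))
  calc ‖Complex.log z‖ ≤ |(Complex.log z).re| + |(Complex.log z).im| :=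
        norm_le_abs_re_add_abs_im _
    _ = Real.log ‖z‖ + |arg z| := by rw [log_re, log_im, abs_of_nonneg hlog]
    _ ≤ _ := by linarith [log_norm_le hq hqz, abs_arg_le_arctan hq hqz]

lemma norm_cpow_neg_le {s : ℂ} (hq : 0 < q) (hqz : q ≤ z.re) (hs : 0 ≤ s.re) :
    ‖z ^ (-s)‖ ≤ Real.exp (max 0 (s.im * Real.arctan (z.im / q))) * z.re ^ (-s.re) := by
  have hre : 0 < z.re := hq.trans_le hqz
  have hz : z ≠ 0 := fun h => by simp [h] at hre
  rw [norm_cpow_of_ne_zero hz, neg_re, neg_im, mul_neg, Real.exp_neg, div_inv_eq_mul, mul_comm]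
  refine mul_le_mul (Real.exp_le_exp.2 ?_) (Real.rpow_le_rpow_of_nonpos hre (re_le_norm z)
    (neg_nonpos.2 hs)) (by positivity) (by positivity)
  rw [arg_eq_arctan_of_re_pos hre, mul_comm]
  exact Real.mul_arctan_div_le_max _ _ hq hqz

lemma norm_log_pow_mul_cpow_neg_le {s : ℂ} (hq : 0 < q) (hqz : q ≤ z.re) (hz : 1 ≤ z.re)
    (hs : 0 ≤ s.re) (k : ℕ) :
    ‖Complex.log z ^ k * z ^ (-s)‖ ≤ Real.exp (max 0 (s.im * Real.arctan (z.im / q))) *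
      (z.re ^ (-s.re) * (1 / 2 * Real.log (1 + z.im ^ 2 / q ^ 2) + Real.arctan (|z.im| / q) +
        Real.log z.re) ^ k) := by
  have hlog := norm_log_le hq hqz hz
  calc ‖Complex.log z ^ k * z ^ (-s)‖ = ‖Complex.log z‖ ^ k * ‖z ^ (-s)‖ := by
        rw [norm_mul, norm_pow]
    _ ≤ _ * (Real.exp (max 0 (s.im * Real.arctan (z.im / q))) * z.re ^ (-s.re)) :=
        mul_le_mul (pow_le_pow_left₀ (norm_nonneg _) hlog k) (norm_cpow_neg_le hq hqz hs)
          (norm_nonneg _) (pow_nonneg ((norm_nonneg _).trans hlog) k)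
    _ = _ := by ring

end Complex

lemma integrableOn_Ioi_rpow_neg_mul_add_log_pow {A B : ℝ} (hA : 0 < A) (hB : 1 < B)
    (C : ℝ) (k : ℕ) :
    IntegrableOn (fun t : ℝ => t ^ (-B) * (C + log t) ^ k) (Ioi A) := by
  set δ : ℝ := (B - 1) / (k + 1)
  have hδ : 0 < δ := div_pos (by linarith) (by positivity)
  have hδk : δ * k < B - 1 := by
    rw [div_mul_eq_mul_div, div_lt_iff₀ (by positivity)]
    nlinarith
  -- `C + log t = O(t ^ δ)`, and `δ` is small enough that `t ^ (-B) (t ^ δ) ^ k` is integrable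
  have hlog : (fun t : ℝ => C + log t) =O[atTop] fun t => t ^ δ :=
    (isLittleO_const_left.2 <| Or.inr <|
      tendsto_norm_atTop_atTop.comp (tendsto_rpow_atTop hδ)).isBigO.add
      (isLittleO_log_rpow_atTop hδ).isBigO
  have hbigO : (fun t : ℝ => t ^ (-B) * (C + log t) ^ k) =O[atTop]
      fun t => t ^ (-B + δ * k) := by
    refine ((isBigO_refl (fun t : ℝ => t ^ (-B)) atTop).mul (hlog.pow k)).trans_eventuallyEq ?_
    filter_upwards [eventually_gt_atTop 0] with t ht
    rw [← rpow_natCast, ← rpow_mul ht.le, ← rpow_add ht]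
  have hcont : ContinuousOn (fun t : ℝ => t ^ (-B) * (C + log t) ^ k) (Ici A) := by
    intro t ht
    have ht0 : t ≠ 0 := (hA.trans_le ht).ne'
    exact ((continuousAt_rpow_const _ _ (Or.inl ht0)).mul
      ((continuousAt_const.add (continuousAt_log ht0)).pow k)).continuousWithinAt
  exact (hcont.locallyIntegrableOn measurableSet_Ici).integrableOn_of_isBigO_atTop hbigO
    (integrableAtFilter_rpow_atTop_iff.2 (by linarith)) |>.mono_set Ioi_subset_Ici_self

lemma MeasureTheory.integral_Ioi_comp_add_right (f : ℝ → ℝ) (c d : ℝ) :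
    ∫ t in Ioi c, f (t + d) = ∫ u in Ioi (c + d), f u := by
  have h := (measurePreserving_add_right volume d).setIntegral_preimage_emb
    (MeasurableEquiv.addRight d).measurableEmbedding f (Ioi (c + d))
  simpa using h

lemma MeasureTheory.IntegrableOn.comp_add_right_Ioi {f : ℝ → ℝ} {c d : ℝ}
    (hf : IntegrableOn f (Ioi (c + d))) :
    IntegrableOn (fun t => f (t + d)) (Ioi c) := by
  have h := (measurePreserving_add_right volume d).restrict_preimage_emb
    (MeasurableEquiv.addRight d).measurableEmbedding (Ioi (c + d))
  simp only [preimage_add_const_Ioi, add_sub_cancel_right] at h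
  exact (h.integrable_comp_emb (MeasurableEquiv.addRight d).measurableEmbedding).2 hf

theorem hurwitz_remainder_coefficient_bound_general
    (s a : ℂ) (N M : ℕ)
    (haN : 1 < a.re + N) (hsM : 1 < s.re + 2 * M) (k : ℕ) :
    (∫ t in Set.Ioi (N : ℝ),
        ‖Complex.log (a + (t : ℂ)) ^ k * (a + (t : ℂ)) ^ (-(s + 2 * (M : ℂ)))‖) ≤
      Real.exp (max 0 (s.im * Real.arctan (a.im / (a.re + N)))) *
        J (N + a.re) (s.re + 2 * M)
          (1 / 2 * Real.log (1 + a.im ^ 2 / (a.re + N) ^ 2) +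
            Real.arctan (|a.im| / (a.re + N))) k := by
  set K := Real.exp (max 0 (s.im * Real.arctan (a.im / (a.re + N))))
  set C := 1 / 2 * Real.log (1 + a.im ^ 2 / (a.re + N) ^ 2) + Real.arctan (|a.im| / (a.re + N))
  set g : ℝ → ℝ := fun u => u ^ (-(s.re + 2 * M)) * (C + Real.log u) ^ k
  have hg : IntegrableOn g (Ioi (N + a.re)) :=
    integrableOn_Ioi_rpow_neg_mul_add_log_pow (by linarith) hsM C k
  have hpointwise : ∀ t ∈ Ioi (N : ℝ),
      ‖Complex.log (a + t) ^ k * (a + t) ^ (-(s + 2 * (M : ℂ)))‖ ≤ K * g (t + a.re) := by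
    intro t (ht : (N : ℝ) < t)
    have hre : (a + t).re = t + a.re := by simp [add_comm]
    have him : (a + t).im = a.im := by simp
    have hsre : (s + 2 * M).re = s.re + 2 * M := by simp
    have hsim : (s + 2 * M).im = s.im := by simp
    have h := Complex.norm_log_pow_mul_cpow_neg_le (z := a + t) (s := s + 2 * M)
      (q := a.re + N) (by linarith) (by rw [hre]; linarith) (by rw [hre]; linarith)
      (by rw [hsre]; linarith) k
    rwa [hre, him, hsre, hsim] at h
  calc (∫ t in Ioi (N : ℝ), ‖Complex.log (a + t) ^ k * (a + t) ^ (-(s + 2 * (M : ℂ)))‖)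
      ≤ ∫ t in Ioi (N : ℝ), K * g (t + a.re) :=
        integral_mono_of_nonneg (.of_forall fun _ => norm_nonneg _)
          (hg.comp_add_right_Ioi.const_mul K)
          (ae_restrict_of_forall_mem measurableSet_Ioi hpointwise)
    _ = K * J (N + a.re) (s.re + 2 * M) C k := by
        rw [integral_const_mul, integral_Ioi_comp_add_right]; rfl

/-- Key coefficient bound in Theorem 1 of the paper: with `s = σ + τi`, `a = α + βi`,
positive integers `N, M` such that `α + N > 1` and `σ + 2M > 1`, for every `k ≥ 0`
`∫_N^∞ |log(a+t)^k (a+t)^{-(s+2M)}| dt ≤ K · J_k(N+α, σ+2M, C)` where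
`C = (1/2) log(1 + β²/(α+N)²) + arctan(|β|/(α+N))` and
`K = exp(max(0, τ arctan(β/(α+N))))`. -/
theorem hurwitz_remainder_coefficient_bound
    (s a : ℂ) (N M : ℕ) (hN : 0 < N) (hM : 0 < M)
    (haN : 1 < a.re + N) (hsM : 1 < s.re + 2 * M) (k : ℕ) :
    (∫ t in Set.Ioi (N : ℝ),
        ‖Complex.log (a + (t : ℂ)) ^ k * (a + (t : ℂ)) ^ (-(s + 2 * (M : ℂ)))‖) ≤
      Real.exp (max 0 (s.im * Real.arctan (a.im / (a.re + N)))) *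
        J (N + a.re) (s.re + 2 * M)
          (1 / 2 * Real.log (1 + a.im ^ 2 / (a.re + N) ^ 2) +
            Real.arctan (|a.im| / (a.re + N))) k :=
  hurwitz_remainder_coefficient_bound_general s a N M haN hsM k
end
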